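/- For star bodies K, L in R^n and 0 ≤ i ≤ n-2, the dual quermassintegrals satisfy the dual Brunn–Minkowski inequality W̃_i(K ~+ L)^{1/(n-i)} ≤ W̃_i(K)^{1/(n-i)} + W̃_i(L)^{1/(n-i)}, with equality if and only if K and L are dilates. -/

import Mathlib

/-! With `p = n - i ≥ 2`, `W̃_i(L)^{1/p}` is `(1/n)^{1/p}` times the `Lᵖ` norm of the radial function
of `L` on the sphere, so the inequality is Minkowski's inequality. For the equality case put
`A = ‖ρ_K‖_p`, `B = ‖ρ_L‖_p` and `F = ρ_K / A`, `G = ρ_L / B`; then `(ρ_K + ρ_L)/(A + B)` is the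
convex combination `A/(A+B) F + B/(A+B) G`, and equality says that integrating `t ↦ t^p` over it
gives the same convex combination of `∫ F^p = ∫ G^p = 1`. The Jensen defect of `t ↦ t^p` is then
a continuous nonnegative function with zero integral, hence zero everywhere, and strict convexity
gives `F = G`. -/

open MeasureTheory Metric
open scoped RealInnerProductSpace

noncomputable section

/-- Euclidean space ℝⁿ. -/
abbrev Euc (n : ℕ) := EuclideanSpace ℝ (Fin n)

/-- The unit sphere S^{n-1} ⊂ ℝⁿ. -/
abbrev Sph (n : ℕ) := Metric.sphere (0 : Euc n) 1

/-- Spherical Lebesgue measure on S^{n-1}. -/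
def sphMeasure (n : ℕ) [NeZero n] : Measure (Sph n) := volume.toSphere

/-- A star body (with respect to the origin) in ℝⁿ, described by its continuous
positive radial function on the unit sphere. -/
structure StarBody (n : ℕ) where
  radial : C(Sph n, ℝ)
  pos : ∀ u, 0 < radial u

/-- Two star bodies are dilates if their radial functions are proportional. -/
def Dilates (n : ℕ) (K L : StarBody n) : Prop :=
  ∃ c : ℝ, 0 < c ∧ ∀ u, K.radial u = c * L.radial u

/-- The i-th dual quermassintegral W̃_i(L) = (1/n) ∫ ρ(L,u)^{n-i} du. -/
def dualQuermass (n : ℕ) [NeZero n] (i : ℕ) (L : StarBody n) : ℝ :=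
  (1 / n : ℝ) * ∫ u, L.radial u ^ (n - i) ∂(sphMeasure n)

/-- The radial Minkowski sum K ~+ L, with ρ(K ~+ L,·) = ρ(K,·) + ρ(L,·). -/
def radAdd (n : ℕ) (K L : StarBody n) : StarBody n :=
  ⟨K.radial + L.radial, fun u => by
    simpa using add_pos (K.pos u) (L.pos u)⟩

section Minkowski

variable {X : Type*} [MeasurableSpace X] {μ : Measure X}

lemma lpNorm_natCast_eq_integral_pow {p : ℕ} (hp : p ≠ 0) {f : X → ℝ}
    (hf : AEStronglyMeasurable f μ) (hf₀ : ∀ x, 0 ≤ f x) :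
    lpNorm f p μ = (∫ x, f x ^ p ∂μ) ^ ((1 : ℝ) / p) := by
  rw [lpNorm_eq_integral_norm_rpow_toReal (by exact_mod_cast hp) (ENNReal.natCast_ne_top p) hf,
    ENNReal.toReal_natCast, one_div]
  simp only [Real.norm_of_nonneg (hf₀ _), Real.rpow_natCast]

lemma lpNorm_natCast_pow {p : ℕ} (hp : p ≠ 0) {f : X → ℝ}
    (hf : AEStronglyMeasurable f μ) (hf₀ : ∀ x, 0 ≤ f x) :
    lpNorm f p μ ^ p = ∫ x, f x ^ p ∂μ := by
  rw [lpNorm_natCast_eq_integral_pow hp hf hf₀, one_div,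
    Real.rpow_inv_natCast_pow (integral_nonneg fun x ↦ pow_nonneg (hf₀ x) p) hp]

lemma integral_div_const_pow (p : ℕ) (f : X → ℝ) (c : ℝ) :
    ∫ x, (f x / c) ^ p ∂μ = (∫ x, f x ^ p ∂μ) / c ^ p := by
  simp only [div_pow]
  exact integral_div _ _

variable [TopologicalSpace X] [CompactSpace X] [OpensMeasurableSpace X] [IsFiniteMeasure μ]

lemma Continuous.integrable_of_compactSpace {f : X → ℝ} (hf : Continuous f) : Integrable f μ :=
  hf.integrable_of_hasCompactSupport (.of_compactSpace f)

lemma lpNorm_natCast_pos [μ.IsOpenPosMeasure] [Nonempty X] {p : ℕ} (hp : p ≠ 0) {f : X → ℝ}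
    (hf : Continuous f) (hf₀ : ∀ x, 0 < f x) : 0 < lpNorm f p μ := by
  rw [lpNorm_natCast_eq_integral_pow hp hf.aestronglyMeasurable fun x ↦ (hf₀ x).le]
  refine Real.rpow_pos_of_pos (integral_pos_of_integrable_nonneg_nonzero (x := Classical.arbitrary X)
    (hf.pow p) (hf.pow p).integrable_of_compactSpace (fun x ↦ pow_nonneg (hf₀ x).le p)
    (pow_pos (hf₀ _) p).ne') _

lemma eq_of_integral_convexCombination_pow_eq [μ.IsOpenPosMeasure] {p : ℕ} (hp : 2 ≤ p)
    {F G : X → ℝ} (hF : Continuous F) (hG : Continuous G) (hF₀ : ∀ x, 0 ≤ F x) (hG₀ : ∀ x, 0 ≤ G x)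
    {s t : ℝ} (hs : 0 < s) (ht : 0 < t) (hst : s + t = 1)
    (h : ∫ x, (s * F x + t * G x) ^ p ∂μ = s * ∫ x, F x ^ p ∂μ + t * ∫ x, G x ^ p ∂μ) :
    F = G := by
  by_contra hne
  obtain ⟨x, hx⟩ := Function.ne_iff.mp hne
  set D : X → ℝ := fun y ↦ s * F y ^ p + t * G y ^ p - (s * F y + t * G y) ^ p
  have hD₀ : 0 ≤ D := fun y ↦ sub_nonneg.mpr <| by
    simpa only [smul_eq_mul] using
      (convexOn_pow p).2 (Set.mem_Ici.mpr (hF₀ y)) (Set.mem_Ici.mpr (hG₀ y)) hs.le ht.le hst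
  have hDx : D x ≠ 0 := (sub_pos.mpr <| by
    simpa only [smul_eq_mul] using
      (strictConvexOn_pow hp).2 (Set.mem_Ici.mpr (hF₀ x)) (Set.mem_Ici.mpr (hG₀ x)) hx hs ht hst).ne'
  have hDc : Continuous D := by fun_prop
  have hD_pos : 0 < ∫ y, D y ∂μ :=
    integral_pos_of_integrable_nonneg_nonzero hDc hDc.integrable_of_compactSpace hD₀ hDx
  have hD_zero : ∫ y, D y ∂μ = 0 := by
    have hFp : Integrable (fun y ↦ s * F y ^ p) μ :=
      ((hF.pow p).integrable_of_compactSpace).const_mul s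
    have hGp : Integrable (fun y ↦ t * G y ^ p) μ :=
      ((hG.pow p).integrable_of_compactSpace).const_mul t
    have hconv : Continuous fun y ↦ (s * F y + t * G y) ^ p := by fun_prop
    have hsum : Integrable (fun y ↦ s * F y ^ p + t * G y ^ p) μ := hFp.add hGp
    rw [integral_sub hsum hconv.integrable_of_compactSpace, integral_add hFp hGp,
      integral_const_mul, integral_const_mul, h, sub_self]
  exact hD_pos.ne' hD_zero

lemma integral_div_lpNorm_pow [μ.IsOpenPosMeasure] [Nonempty X] {p : ℕ} (hp : p ≠ 0)
    {f : X → ℝ} (hf : Continuous f) (hf₀ : ∀ x, 0 < f x) :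
    ∫ x, (f x / lpNorm f p μ) ^ p ∂μ = 1 := by
  rw [integral_div_const_pow, ← lpNorm_natCast_pow hp hf.aestronglyMeasurable fun x ↦ (hf₀ x).le]
  exact div_self (pow_ne_zero _ (lpNorm_natCast_pos hp hf hf₀).ne')

theorem lpNorm_add_eq_iff [μ.IsOpenPosMeasure] [Nonempty X] {p : ℕ} (hp : 2 ≤ p) {f g : X → ℝ}
    (hf : Continuous f) (hg : Continuous g) (hf₀ : ∀ x, 0 < f x) (hg₀ : ∀ x, 0 < g x) :
    lpNorm (f + g) p μ = lpNorm f p μ + lpNorm g p μ ↔ ∃ c, 0 < c ∧ ∀ x, f x = c * g x := by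
  have hp₀ : p ≠ 0 := by omega
  constructor
  · intro h
    set A := lpNorm f p μ
    set B := lpNorm g p μ
    have hA : 0 < A := lpNorm_natCast_pos hp₀ hf hf₀
    have hB : 0 < B := lpNorm_natCast_pos hp₀ hg hg₀
    have hcomb : ∀ x, A / (A + B) * (f x / A) + B / (A + B) * (g x / B) = (f x + g x) / (A + B) :=
      fun x ↦ by field_simp
    have hsum : ∫ x, ((f x + g x) / (A + B)) ^ p ∂μ = 1 := by
      rw [← h]
      exact integral_div_lpNorm_pow hp₀ (hf.add hg) fun x ↦ add_pos (hf₀ x) (hg₀ x)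
    have hFG : (f · / A) = (g · / B) := by
      refine eq_of_integral_convexCombination_pow_eq (μ := μ) hp (hf.div_const A) (hg.div_const B)
        (fun x ↦ div_nonneg (hf₀ x).le hA.le) (fun x ↦ div_nonneg (hg₀ x).le hB.le)
        (div_pos hA (add_pos hA hB)) (div_pos hB (add_pos hA hB)) (by field_simp) ?_
      have hF : ∫ x, (f x / A) ^ p ∂μ = 1 := integral_div_lpNorm_pow hp₀ hf hf₀
      have hG : ∫ x, (g x / B) ^ p ∂μ = 1 := integral_div_lpNorm_pow hp₀ hg hg₀
      simp only [hcomb, hsum, hF, hG]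
      field_simp
    refine ⟨A / B, div_pos hA hB, fun x ↦ ?_⟩
    have := congrFun hFG x
    field_simp at this ⊢
    linarith
  · rintro ⟨c, hc, hfg⟩
    have hf_eq : f = c • g := funext hfg
    have hfg_eq : f + g = (c + 1) • g := by rw [hf_eq, add_smul, one_smul]
    rw [hfg_eq, hf_eq, lpNorm_const_smul, lpNorm_const_smul, Real.nnnorm_of_nonneg (by positivity),
      Real.nnnorm_of_nonneg hc.le]
    push_cast
    ring

end Minkowski

instance (n : ℕ) [NeZero n] : IsFiniteMeasure (sphMeasure n) := by
  unfold sphMeasure; infer_instance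

instance (n : ℕ) [NeZero n] : (sphMeasure n).IsOpenPosMeasure := by
  unfold sphMeasure; infer_instance

instance (n : ℕ) [NeZero n] : Nonempty (Sph n) :=
  (NormedSpace.sphere_nonempty.mpr zero_le_one).to_subtype

lemma dualQuermass_rpow_eq (n i : ℕ) [NeZero n] (hi : i < n) (L : StarBody n) :
    dualQuermass n i L ^ ((1 : ℝ) / ((n - i : ℕ) : ℝ)) =
      (1 / n : ℝ) ^ ((1 : ℝ) / ((n - i : ℕ) : ℝ)) * lpNorm L.radial (n - i : ℕ) (sphMeasure n) := by
  rw [dualQuermass, lpNorm_natCast_eq_integral_pow (by omega) L.radial.continuous.aestronglyMeasurable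
    fun u ↦ (L.pos u).le, Real.mul_rpow (by positivity)
    (integral_nonneg fun u ↦ pow_nonneg (L.pos u).le _)]

/-- Dual Brunn–Minkowski inequality: for star bodies K, L and 0 ≤ i ≤ n-2,
W̃_i(K ~+ L)^{1/(n-i)} ≤ W̃_i(K)^{1/(n-i)} + W̃_i(L)^{1/(n-i)},
with equality iff K and L are dilates. -/
theorem stmt6 (n i : ℕ) (hn : 3 ≤ n) [NeZero n] (hi : i ≤ n - 2) (K L : StarBody n) :
    dualQuermass n i (radAdd n K L) ^ ((1 : ℝ) / ((n - i : ℕ) : ℝ)) ≤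
      dualQuermass n i K ^ ((1 : ℝ) / ((n - i : ℕ) : ℝ)) +
      dualQuermass n i L ^ ((1 : ℝ) / ((n - i : ℕ) : ℝ)) ∧
    (dualQuermass n i (radAdd n K L) ^ ((1 : ℝ) / ((n - i : ℕ) : ℝ)) =
      dualQuermass n i K ^ ((1 : ℝ) / ((n - i : ℕ) : ℝ)) +
      dualQuermass n i L ^ ((1 : ℝ) / ((n - i : ℕ) : ℝ)) ↔
      Dilates n K L) := by
  have hp : 2 ≤ n - i := by omega
  have hK := K.radial.continuous
  have hL := L.radial.continuous
  simp only [dualQuermass_rpow_eq n i (by omega)]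
  set k : ℝ := (1 / n : ℝ) ^ ((1 : ℝ) / ((n - i : ℕ) : ℝ))
  have hk : 0 < k := Real.rpow_pos_of_pos (by positivity) _
  have hsum : ⇑(radAdd n K L).radial = ⇑K.radial + ⇑L.radial := rfl
  rw [hsum, ← mul_add, mul_right_inj' hk.ne',
    lpNorm_add_eq_iff hp hK hL K.pos L.pos]
  refine ⟨mul_le_mul_of_nonneg_left (lpNorm_add_le (hK.memLp_of_hasCompactSupport
    (.of_compactSpace _)) (by exact_mod_cast (by omega : 1 ≤ n - i))) hk.le, Iff.rfl⟩
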